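/- arXiv:2010.11450 — 9 statements merged into one kernel-verified Lean document; each statement's English description precedes it below -/
import Mathlib

section
/- Let p ≥ 1, δ > 0, d ≥ 4, and let f : ℝ^d → Δ_{d−1} be a δ-approximate soft-max function satisfying KL(f(x) ‖ f(y)) ≤ c · ‖x − y‖_p for all x, y ∈ ℝ^d. Then c > (log d − 2) / (4δ) (natural logarithm). -/
open Finset
open scoped Classical

/-- The `ℓ_p` norm of a vector in `ℝ^d`. -/
noncomputable def pnorm {d : ℕ} (p : ℝ) (z : Fin d → ℝ) : ℝ :=
  (∑ i, |z i| ^ p) ^ (1 / p)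

/-- Kullback–Leibler divergence `KL(x‖y) = Σ_i x_i log(x_i / y_i)`, with the conventions
`0 · log(0/a) = 0` (automatic since `0 * log 0 = 0` in Lean) and
`t · log(t/0) = +∞` for `t > 0`. -/
noncomputable def KL {d : ℕ} (x y : Fin d → ℝ) : EReal :=
  if ∃ i, 0 < x i ∧ y i = 0 then ⊤
  else ((∑ i, x i * Real.log (x i / y i) : ℝ) : EReal)

lemma mul_log_div_ge (a b : ℝ) (ha : 0 ≤ a) (hb : 0 ≤ b) :
    -Real.exp (-1) * b ≤ a * Real.log (a / b) := by
  rcases eq_or_lt_of_le ha with h | h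
  · have : -Real.exp (-1) * b ≤ 0 := by
      have := Real.exp_pos (-1); nlinarith
    simpa [← h] using this
  rcases eq_or_lt_of_le hb with h' | h'
  · simp [← h']
  · set t := a / b with ht
    have htpos : 0 < t := div_pos h h'
    have h1 : -(1 + Real.log t) + 1 ≤ Real.exp (-(1 + Real.log t)) :=
      Real.add_one_le_exp _
    have h2 : Real.exp (-(1 + Real.log t)) = (Real.exp 1 * t)⁻¹ := by
      rw [Real.exp_neg, Real.exp_add, Real.exp_log htpos]
    have h3 : -Real.log t ≤ (Real.exp 1 * t)⁻¹ := by linarith [h1, h2.le, h2.ge]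
    have hepos : 0 < Real.exp 1 := Real.exp_pos 1
    have hinv : (Real.exp 1 * t)⁻¹ * (Real.exp 1 * t) = 1 := by
      field_simp
    have h4 : -Real.exp (-1) ≤ t * Real.log t := by
      have hexpneg : Real.exp (-1) * Real.exp 1 = 1 := by
        rw [← Real.exp_add]; norm_num
      nlinarith [mul_pos hepos htpos]
    have hab : a = t * b := (div_mul_cancel₀ a h'.ne').symm
    calc -Real.exp (-1) * b ≤ (t * Real.log t) * b := by nlinarith
    _ = a * Real.log t := by rw [hab]; ring

/-- Any `δ`-approximate soft-max function that is `(ℓ_p, KL)`-Lipschitz with constant `c`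
must have `c > (log d − 2)/(4δ)` (for `d ≥ 4`). -/
theorem kl_lipschitz_lower_bound (d : ℕ) (hd : 4 ≤ d) (p δ : ℝ) (hp : 1 ≤ p)
    (hδ : 0 < δ) (c : ℝ) (f : (Fin d → ℝ) → Fin d → ℝ)
    (hsimplex : ∀ x, (∀ i, 0 ≤ f x i) ∧ ∑ i, f x i = 1)
    (happrox : ∀ x : Fin d → ℝ, ∑ i, x i * f x i ≥ (⨆ i, x i) - δ)
    (hlip : ∀ x y : Fin d → ℝ, KL (f x) (f y) ≤ ((c * pnorm p (x - y) : ℝ) : EReal)) :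
    c > (Real.log d - 2) / (4 * δ) := by
  haveI : NeZero d := ⟨by omega⟩
  have hd0 : (0:ℝ) < d := by positivity
  set z : Fin d → ℝ := fun _ => 0 with hz
  obtain ⟨hf0nn, hf0sum⟩ := hsimplex z
  -- choose i with f z i ≤ 1/d
  obtain ⟨i, hi⟩ : ∃ i, f z i ≤ 1 / d := by
    by_contra hcon
    push_neg at hcon
    have h1 : ∑ j : Fin d, (1/(d:ℝ)) < ∑ j, f z j :=
      Finset.sum_lt_sum_of_nonempty Finset.univ_nonempty (fun j _ => hcon j)
    rw [hf0sum, Finset.sum_const, Finset.card_univ, Fintype.card_fin] at h1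
    have : (d:ℝ) * (1/d) = 1 := by field_simp
    simp only [nsmul_eq_mul] at h1
    linarith
  set x : Fin d → ℝ := fun j => if j = i then 2*δ else 0 with hx
  obtain ⟨hfxnn, hfxsum⟩ := hsimplex x
  -- the sup of x is 2δ
  have hxsup : (⨆ j, x j) = 2*δ := by
    apply le_antisymm
    · apply ciSup_le
      intro j
      simp only [hx]
      split_ifs <;> linarith
    · have h := le_ciSup (Set.Finite.bddAbove (Set.finite_range x)) i
      simpa [hx] using h
  -- f x i ≥ 1/2
  have hsum : ∑ j, x j * f x j = 2*δ * f x i := by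
    rw [Finset.sum_eq_single i]
    · simp [hx]
    · intro j _ hj; simp [hx, hj]
    · intro h; exact absurd (Finset.mem_univ i) h
  have hfx : 1/2 ≤ f x i := by
    have h := happrox x
    rw [hsum, hxsup] at h
    nlinarith
  -- pnorm computation
  have hp0 : p ≠ 0 := by linarith
  have hxnorm : pnorm p (x - z) = 2*δ := by
    unfold pnorm
    have hterm : ∀ j, |(x - z) j| ^ p = if j = i then (2*δ)^p else 0 := by
      intro j
      simp only [Pi.sub_apply, hz, hx, sub_zero]
      split_ifs
      · rw [abs_of_pos (by linarith)]
      · rw [abs_zero, Real.zero_rpow hp0]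
    rw [Finset.sum_congr rfl (fun j _ => hterm j), Finset.sum_ite_eq' univ i,
      if_pos (Finset.mem_univ i)]
    rw [one_div, Real.rpow_rpow_inv (by linarith) hp0]
  have hlipx := hlip x z
  rw [hxnorm] at hlipx
  unfold KL at hlipx
  split_ifs at hlipx with hcond
  · rw [top_le_iff] at hlipx
    exact absurd hlipx (EReal.coe_ne_top _)
  push_neg at hcond
  have hreal : (∑ j, f x j * Real.log (f x j / f z j)) ≤ c * (2*δ) :=
    EReal.coe_le_coe_iff.mp hlipx
  have hfzpos : 0 < f z i := by
    rcases eq_or_lt_of_le (hf0nn i) with h | h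
    · exact absurd h.symm (hcond i (by linarith))
    · exact h
  -- lower bound on the i-th term
  have hlogterm : Real.log ((d:ℝ)/2) / 2 ≤ f x i * Real.log (f x i / f z i) := by
    have hr : (d:ℝ)/2 ≤ f x i / f z i := by
      rw [le_div_iff₀ hfzpos]
      have hd1 : (d:ℝ) * (1/d) = 1 := by field_simp
      nlinarith
    have hlog1 : Real.log ((d:ℝ)/2) ≤ Real.log (f x i / f z i) :=
      Real.log_le_log (by positivity) hr
    have hlognn : 0 ≤ Real.log ((d:ℝ)/2) := by
      apply Real.log_nonneg
      rw [le_div_iff₀ (by norm_num : (0:ℝ) < 2)]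
      norm_num
      linarith
    nlinarith
  -- lower bound on the rest
  have hsplit : ∑ j, f x j * Real.log (f x j / f z j) =
      f x i * Real.log (f x i / f z i)
      + ∑ j ∈ Finset.univ.erase i, f x j * Real.log (f x j / f z j) :=
    (Finset.add_sum_erase _ _ (Finset.mem_univ i)).symm
  have hzsplit : f z i + ∑ j ∈ Finset.univ.erase i, f z j = 1 := by
    rw [Finset.add_sum_erase _ _ (Finset.mem_univ i), hf0sum]
  have hrest : -Real.exp (-1) ≤ ∑ j ∈ Finset.univ.erase i, f x j * Real.log (f x j / f z j) := by
    have h1 : ∑ j ∈ Finset.univ.erase i, (-Real.exp (-1) * f z j)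
        ≤ ∑ j ∈ Finset.univ.erase i, f x j * Real.log (f x j / f z j) :=
      Finset.sum_le_sum (fun j _ => mul_log_div_ge _ _ (hfxnn j) (hf0nn j))
    have h2 : ∑ j ∈ Finset.univ.erase i, (-Real.exp (-1) * f z j)
        = -Real.exp (-1) * (1 - f z i) := by
      rw [← Finset.mul_sum]
      congr 1
      linarith
    have h3 : -Real.exp (-1) ≤ -Real.exp (-1) * (1 - f z i) := by
      have := Real.exp_pos (-1)
      nlinarith [hf0nn i, hfzpos]
    linarith
  -- combine
  have hmain : Real.log ((d:ℝ)/2) / 2 - Real.exp (-1) ≤ c * (2*δ) := by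
    rw [hsplit] at hreal
    linarith
  have hlogdiv : Real.log ((d:ℝ)/2) = Real.log d - Real.log 2 :=
    Real.log_div (by positivity) (by norm_num)
  -- numeric facts
  have hlog2 : Real.log 2 < 1 := by
    have := Real.log_lt_sub_one_of_pos (by norm_num : (0:ℝ) < 2) (by norm_num)
    linarith
  have hexpneg : Real.exp (-1) ≤ 1/2 := by
    have he2 : (2:ℝ) ≤ Real.exp 1 := by
      have := Real.add_one_le_exp 1; linarith
    have hid : Real.exp (-1) * Real.exp 1 = 1 := by
      rw [← Real.exp_add]; norm_num
    nlinarith [Real.exp_pos (-1)]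
  rw [gt_iff_lt, div_lt_iff₀ (by positivity : (0:ℝ) < 4*δ)]
  rw [hlogdiv] at hmain
  nlinarith
end

section
/- For any p ≥ 1, δ > 0, and d ≥ 2, there is no soft-max function f : ℝ^d → Δ_{d−1} that is δ-approximate in the worst case and satisfies, for some finite constant c, KL(f(x) ‖ f(y)) ≤ c · ‖x − y‖_p for all x, y ∈ ℝ^d. -/
open Finset
open scoped Classical

/-- There is no soft-max function that is `δ`-approximate in the worst case and
`(ℓ_p, KL)`-Lipschitz with some finite constant `c`. -/
theorem no_worst_case_KL_lipschitz (d : ℕ) (hd : 2 ≤ d) (p δ : ℝ) (hp : 1 ≤ p)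
    (hδ : 0 < δ) :
    ¬ ∃ (f : (Fin d → ℝ) → Fin d → ℝ) (c : ℝ),
        (∀ x, (∀ i, 0 ≤ f x i) ∧ ∑ i, f x i = 1) ∧
        (∀ x : Fin d → ℝ, ∀ i, 0 < f x i → x i ≥ (⨆ j, x j) - δ) ∧
        (∀ x y : Fin d → ℝ, KL (f x) (f y) ≤ ((c * pnorm p (x - y) : ℝ) : EReal)) := by
  rintro ⟨f, c, hsum, happ, hlip⟩
  set i0 : Fin d := ⟨0, by omega⟩ with hi0
  set i1 : Fin d := ⟨1, by omega⟩ with hi1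
  have hne : i0 ≠ i1 := by simp [hi0, hi1, Fin.ext_iff]
  set x : Fin d → ℝ := fun i => if i = i0 then 2 * δ else 0 with hx
  set y : Fin d → ℝ := fun i => if i = i1 then 2 * δ else 0 with hy
  haveI : Nonempty (Fin d) := ⟨i0⟩
  have hsup : ∀ z : Fin d → ℝ, ∀ k : Fin d,
      (∀ i, z i ≤ z k) → (⨆ j, z j) = z k := by
    intro z k hk
    refine le_antisymm (ciSup_le hk) (le_ciSup (Set.finite_range z).bddAbove k)
  have hsupx : (⨆ j, x j) = 2 * δ := by
    have := hsup x i0 (fun i => by by_cases h : i = i0 <;> simp [hx, h] <;> linarith)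
    simpa [hx] using this
  have hsupy : (⨆ j, y j) = 2 * δ := by
    have := hsup y i1 (fun i => by by_cases h : i = i1 <;> simp [hy, h] <;> linarith)
    simpa [hy] using this
  -- f x vanishes off i0
  have hfx : ∀ i, i ≠ i0 → f x i = 0 := by
    intro i hi
    by_contra h
    have hpos : 0 < f x i := lt_of_le_of_ne ((hsum x).1 i) (Ne.symm h)
    have := happ x i hpos
    rw [hsupx] at this
    simp only [hx, if_neg hi] at this
    linarith
  -- f y vanishes off i1, in particular at i0
  have hfy : f y i0 = 0 := by
    by_contra h
    have hpos : 0 < f y i0 := lt_of_le_of_ne ((hsum y).1 i0) (Ne.symm h)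
    have := happ y i0 hpos
    rw [hsupy] at this
    simp only [hy, if_neg hne] at this
    linarith
  have hfx0 : f x i0 = 1 := by
    have := (hsum x).2
    rwa [Finset.sum_eq_single i0 (fun b _ hb => hfx b hb) (by simp)] at this
  have hKL : KL (f x) (f y) = ⊤ := by
    rw [KL, if_pos ⟨i0, by rw [hfx0]; exact one_pos, hfy⟩]
  have := hlip x y
  rw [hKL] at this
  exact (EReal.coe_lt_top _).not_ge this
end

section
/- Let δ > 0 and d ≥ 1. For every x ∈ ℝ^d and every permutation π sorting x in decreasing order (x_{π(1)} ≥ ⋯ ≥ x_{π(d)}), the vector PLSoftMax^δ(x) = (1/δ) · P_π^{-1} · SM_{(k_x, d)} · P_π · x + P_π^{-1} · u^{(k_x)} lies in the simplex Δ_{d−1}: all its coordinates are nonnegative and they sum to 1. -/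
/-!
Work in sorted coordinates `y = x ∘ π`, so that `PLSoftMax` is a permutation of
`(1/δ) • SM *ᵥ y + u`. The matrix `SM_{(k,d)}` has zero column sums, so the first summand
contributes nothing to the total and `u^{(k)}` supplies the `1`. Its first `k` rows have zero
row sums and nonpositive off-diagonal entries; since `y` is antitone this gives
`(SM *ᵥ y)_m = ∑ⱼ SM_{mj} (y_j - y_m) ≥ -(y_0 - y_m)/k ≥ -δ/k` for `m < k_x`, which
`u_m = 1/k` compensates after scaling by `1/δ`. The rows `m ≥ k` vanish, as does `u_m`.
-/

open Finset
open scoped Classical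

/-- The soft-max matrix `SM_{(k,d)}` (1-indexed description): `m_{11} = (k−1)/k`;
`m_{ii} = 1/i` for `2 ≤ i ≤ k`; `m_{i1} = −1/k` for `2 ≤ i ≤ k`;
`m_{ij} = −1/(j(j−1))` for `1 ≤ i < j ≤ k`, `j ≥ 2`; all other entries `0`. -/
noncomputable def SM (k d : ℕ) : Matrix (Fin d) (Fin d) ℝ :=
  Matrix.of fun i j =>
    if k < (i : ℕ) + 1 ∨ k < (j : ℕ) + 1 then 0
    else if (i : ℕ) + 1 = 1 ∧ (j : ℕ) + 1 = 1 then ((k : ℝ) - 1) / k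
    else if (i : ℕ) = (j : ℕ) then 1 / ((i : ℕ) + 1 : ℝ)
    else if (j : ℕ) + 1 = 1 then -1 / (k : ℝ)
    else if (i : ℕ) < (j : ℕ) then
      -1 / ((((j : ℕ) + 1 : ℕ) : ℝ) * (((j : ℕ) + 1 : ℝ) - 1))
    else 0

/-- The vector `u^{(k)} ∈ ℝ^d`, `u^{(k)}_i = 1/k` for the first `k` coordinates, else `0`. -/
noncomputable def uvec (k d : ℕ) : Fin d → ℝ :=
  fun i => if (i : ℕ) + 1 ≤ k then 1 / (k : ℝ) else 0

/-- The permutation matrix `P_π`, with `1`'s at entries `(i, π(i))`. -/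
def permMat (d : ℕ) (π : Equiv.Perm (Fin d)) : Matrix (Fin d) (Fin d) ℝ :=
  Matrix.of fun i j => if j = π i then 1 else 0

/-- `π` is a sorting permutation for `x`, i.e. `x_{π(1)} ≥ x_{π(2)} ≥ ⋯ ≥ x_{π(d)}`. -/
def Sorts {d : ℕ} (x : Fin d → ℝ) (π : Equiv.Perm (Fin d)) : Prop :=
  ∀ i j : Fin d, i ≤ j → x (π j) ≤ x (π i)

/-- `k_x`: the largest `k ∈ {1,…,d}` with `x_{π(1)} − x_{π(k)} ≤ δ`. -/
noncomputable def kx {d : ℕ} (δ : ℝ) (x : Fin d → ℝ) (π : Equiv.Perm (Fin d)) : ℕ :=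
  sSup {k : ℕ | 1 ≤ k ∧ k ≤ d ∧
    ∃ h0 : 0 < d, ∃ h : k - 1 < d, x (π ⟨0, h0⟩) - x (π ⟨k - 1, h⟩) ≤ δ}

/-- `PLSoftMax^δ(x) = (1/δ)·P_π⁻¹·SM_{(k_x,d)}·P_π·x + P_π⁻¹·u^{(k_x)}`,
computed using the sorting permutation `π` of `x`. -/
noncomputable def PLSoftMax {d : ℕ} (δ : ℝ) (x : Fin d → ℝ)
    (π : Equiv.Perm (Fin d)) : Fin d → ℝ :=
  (1 / δ) • ((permMat d π⁻¹).mulVec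
      ((SM (kx δ x π) d).mulVec ((permMat d π).mulVec x)))
    + (permMat d π⁻¹).mulVec (uvec (kx δ x π) d)
open scoped Matrix

/-- The entries of `SM_{(k,d)}`, 0-indexed and written uniformly: the corner entry `(k-1)/k`
is `-1/k + 1/1`. -/
noncomputable def smEntry (k i j : ℕ) : ℝ :=
  if i < k ∧ j < k then
    (if j = 0 then -1 / (k : ℝ) else 0) + (if i = j then 1 / (i + 1 : ℝ) else 0)
      - (if i < j then 1 / ((j + 1) * j : ℝ) else 0)
  else 0

theorem SM_apply_eq_smEntry (k d : ℕ) (i j : Fin d) : SM k d i j = smEntry k i j := by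
  unfold SM smEntry
  simp only [Matrix.of_apply]
  split_ifs <;> first
    | omega
    | ring1
    | (push_cast; ring1)
    | (have hk : (k : ℝ) ≠ 0 := by norm_cast; omega
       rw [show (i : ℕ) = 0 by omega]; field_simp; ring)

section smEntry

variable {k i j : ℕ}

theorem smEntry_eq_zero_of_le_left (h : k ≤ i) : smEntry k i j = 0 :=
  if_neg (by omega)

theorem smEntry_eq_zero_of_le_right (h : k ≤ j) : smEntry k i j = 0 :=
  if_neg (by omega)

theorem smEntry_zero_right (hi : 0 < i) (hik : i < k) : smEntry k i 0 = -1 / k := by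
  simp [smEntry, hik, hi.ne', (hi.trans hik)]

theorem smEntry_eq_zero_of_pos_of_lt (hj : 0 < j) (hji : j < i) : smEntry k i j = 0 := by
  simp [smEntry, hj.ne', hji.ne', hji.not_gt]

theorem smEntry_nonpos_of_ne (hij : i ≠ j) : smEntry k i j ≤ 0 := by
  simp only [smEntry, hij, if_false, add_zero]
  have hk : (0 : ℝ) ≤ 1 / k := by positivity
  have hj : (0 : ℝ) ≤ 1 / ((j + 1) * j) := by positivity
  split_ifs <;> linarith [neg_div (k : ℝ) 1]

end smEntry

theorem sum_Ico_one_div_succ_mul {a b : ℕ} (ha : 0 < a) (hab : a ≤ b) :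
    ∑ j ∈ Ico a b, 1 / ((j + 1) * j : ℝ) = 1 / a - 1 / b := by
  have hterm : ∀ j ∈ Ico a b, 1 / ((j + 1) * j : ℝ) = -(1 / ((j + 1 : ℕ) : ℝ) - 1 / (j : ℝ)) := by
    intro j hj
    have : (j : ℝ) ≠ 0 := by norm_cast; grind
    push_cast
    field_simp
    ring
  rw [sum_congr rfl hterm, sum_neg_distrib, sum_Ico_sub (fun j : ℕ => 1 / (j : ℝ)) hab]
  ring

theorem sum_range_smEntry_row {k i : ℕ} (hi : i < k) : ∑ j ∈ range k, smEntry k i j = 0 := by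
  have hrow : ∀ j ∈ range k, smEntry k i j = (if j = 0 then -1 / (k : ℝ) else 0)
      + (if i = j then 1 / (i + 1 : ℝ) else 0) - (if i < j then 1 / ((j + 1) * j : ℝ) else 0) :=
    fun j hj => if_pos ⟨hi, mem_range.1 hj⟩
  have htail : (range k).filter (i < ·) = Ico (i + 1) k := by ext; simp; omega
  rw [sum_congr rfl hrow, sum_sub_distrib, sum_add_distrib, sum_ite_eq', sum_ite_eq, ← sum_filter,
    htail, sum_Ico_one_div_succ_mul (Nat.succ_pos i) hi]
  simp [hi, Nat.zero_lt_of_lt hi]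
  ring

theorem sum_range_smEntry_col (k j : ℕ) : ∑ i ∈ range k, smEntry k i j = 0 := by
  rcases lt_or_ge j k with hj | hj
  · have hcol : ∀ i ∈ range k, smEntry k i j = (if j = 0 then -1 / (k : ℝ) else 0)
        + (if i = j then 1 / (i + 1 : ℝ) else 0)
        - (if i < j then 1 / ((j + 1) * j : ℝ) else 0) :=
      fun i hi => if_pos ⟨mem_range.1 hi, hj⟩
    have hhead : (range k).filter (· < j) = range j := by ext; simp; omega
    rw [sum_congr rfl hcol, sum_sub_distrib, sum_add_distrib, sum_const, card_range, sum_ite_eq',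
      ← sum_filter, hhead, sum_const, card_range]
    rcases Nat.eq_zero_or_pos j with rfl | hj0
    · have hk : (k : ℝ) ≠ 0 := by norm_cast; omega
      simp [hj]
      field_simp
      ring
    · simp [hj, hj0.ne']
  · exact sum_eq_zero fun i _ => smEntry_eq_zero_of_le_right hj

section SM

variable {k d : ℕ}

theorem sum_SM_row (hkd : k ≤ d) {i : Fin d} (hi : (i : ℕ) < k) : ∑ j, SM k d i j = 0 := by
  simp only [SM_apply_eq_smEntry]
  rw [Fin.sum_univ_eq_sum_range (smEntry k i ·),
    eventually_constant_sum (fun _ hn => smEntry_eq_zero_of_le_right hn) hkd]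
  exact sum_range_smEntry_row hi

theorem sum_SM_col (hkd : k ≤ d) (j : Fin d) : ∑ i, SM k d i j = 0 := by
  simp only [SM_apply_eq_smEntry]
  rw [Fin.sum_univ_eq_sum_range (smEntry k · j),
    eventually_constant_sum (fun _ hn => smEntry_eq_zero_of_le_left hn) hkd]
  exact sum_range_smEntry_col k j

theorem sum_SM_mulVec (hkd : k ≤ d) (y : Fin d → ℝ) : ∑ i, (SM k d *ᵥ y) i = 0 := by
  simp only [Matrix.mulVec, dotProduct]
  rw [sum_comm]
  simp [← sum_mul, sum_SM_col hkd]

theorem SM_mulVec_eq_zero (y : Fin d → ℝ) {i : Fin d} (hi : k ≤ (i : ℕ)) :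
    (SM k d *ᵥ y) i = 0 := by
  simp [Matrix.mulVec, dotProduct, SM_apply_eq_smEntry, smEntry_eq_zero_of_le_left hi]

theorem SM_mulVec_eq_sum_mul_sub (hkd : k ≤ d) (y : Fin d → ℝ) {i : Fin d} (hi : (i : ℕ) < k) :
    (SM k d *ᵥ y) i = ∑ j, SM k d i j * (y j - y i) := by
  simp [Matrix.mulVec, dotProduct, mul_sub, ← sum_mul, sum_SM_row hkd hi]

theorem neg_sub_div_le_SM_mulVec [NeZero d] (hkd : k ≤ d) {y : Fin d → ℝ} (hy : Antitone y)
    {i : Fin d} (hi : (i : ℕ) < k) : -(y 0 - y i) / k ≤ (SM k d *ᵥ y) i := by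
  have hhead : SM k d i 0 * (y 0 - y i) = -(y 0 - y i) / k := by
    rcases eq_or_ne i 0 with rfl | hi0
    · simp
    · rw [SM_apply_eq_smEntry, Fin.val_zero, smEntry_zero_right (Fin.pos_iff_ne_zero.2 hi0) hi]
      ring
  have htail : ∀ j ∈ univ.erase 0, 0 ≤ SM k d i j * (y j - y i) := by
    intro j hj
    have hj0 : 0 < (j : ℕ) := Fin.pos_iff_ne_zero.2 (ne_of_mem_erase hj)
    rcases lt_trichotomy j i with hji | rfl | hij
    · rw [SM_apply_eq_smEntry, smEntry_eq_zero_of_pos_of_lt hj0 hji, zero_mul]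
    · rw [sub_self, mul_zero]
    · exact mul_nonneg_of_nonpos_of_nonpos
        ((SM_apply_eq_smEntry k d i j).trans_le (smEntry_nonpos_of_ne (Fin.val_ne_of_ne hij.ne)))
        (sub_nonpos.2 (hy hij.le))
  rw [SM_mulVec_eq_sum_mul_sub hkd y hi, ← add_sum_erase _ _ (mem_univ 0), hhead]
  exact le_add_of_nonneg_right (sum_nonneg htail)

end SM

theorem sum_uvec {k d : ℕ} (hk : k ≠ 0) (hkd : k ≤ d) : ∑ i, uvec k d i = 1 := by
  have hfilter : (range d).filter (· + 1 ≤ k) = range k := by ext; simp; omega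
  unfold uvec
  rw [Fin.sum_univ_eq_sum_range (fun n => if n + 1 ≤ k then 1 / (k : ℝ) else 0),
    ← sum_filter, hfilter, sum_const, card_range, nsmul_eq_mul]
  field_simp

theorem permMat_mulVec {d : ℕ} (π : Equiv.Perm (Fin d)) (v : Fin d → ℝ) :
    permMat d π *ᵥ v = v ∘ π := by
  ext i
  simp [permMat, Matrix.mulVec, dotProduct, ite_mul]

section kx

variable {d : ℕ} [NeZero d] {δ : ℝ} {x : Fin d → ℝ} {π : Equiv.Perm (Fin d)}

theorem kx_mem (hδ : 0 ≤ δ) : kx δ x π ∈ {k : ℕ | 1 ≤ k ∧ k ≤ d ∧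
    ∃ h0 : 0 < d, ∃ h : k - 1 < d, x (π ⟨0, h0⟩) - x (π ⟨k - 1, h⟩) ≤ δ} := by
  have hd : 0 < d := Nat.pos_of_neZero d
  refine Nat.sSup_mem ⟨1, le_rfl, hd, hd, by omega, by simpa using hδ⟩ ⟨d, fun k hk => hk.2.1⟩

theorem kx_pos (hδ : 0 ≤ δ) : 0 < kx δ x π := (kx_mem hδ).1

theorem kx_le (hδ : 0 ≤ δ) : kx δ x π ≤ d := (kx_mem hδ).2.1

theorem sub_le_of_lt_kx (hδ : 0 ≤ δ) (hπ : Sorts x π) {i : Fin d} (hi : (i : ℕ) < kx δ x π) :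
    x (π 0) - x (π i) ≤ δ := by
  obtain ⟨-, -, hd, hlast, hspread⟩ := kx_mem (x := x) (π := π) hδ
  have : x (π ⟨kx δ x π - 1, hlast⟩) ≤ x (π i) := hπ _ _ (Fin.le_def.2 (by simp; omega))
  rw [show (⟨0, hd⟩ : Fin d) = 0 from Fin.ext (by simp)] at hspread
  linarith

end kx

noncomputable def sortedPLSoftMax {d : ℕ} (δ : ℝ) (k : ℕ) (y : Fin d → ℝ) : Fin d → ℝ :=
  (1 / δ) • (SM k d *ᵥ y) + uvec k d

theorem PLSoftMax_eq_sortedPLSoftMax_comp {d : ℕ} (δ : ℝ) (x : Fin d → ℝ)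
    (π : Equiv.Perm (Fin d)) : PLSoftMax δ x π = sortedPLSoftMax δ (kx δ x π) (x ∘ π) ∘ ⇑π⁻¹ := by
  ext i
  simp only [PLSoftMax, sortedPLSoftMax, permMat_mulVec, Pi.add_apply, Pi.smul_apply,
    Function.comp_apply]

section sortedPLSoftMax

variable {d k : ℕ} {δ : ℝ} {y : Fin d → ℝ}

theorem sortedPLSoftMax_nonneg [NeZero d] (hδ : 0 < δ) (hkd : k ≤ d) (hy : Antitone y)
    (hspread : ∀ i : Fin d, (i : ℕ) < k → y 0 - y i ≤ δ) (i : Fin d) :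
    0 ≤ sortedPLSoftMax δ k y i := by
  simp only [sortedPLSoftMax, Pi.add_apply, Pi.smul_apply, smul_eq_mul, uvec]
  by_cases hi : (i : ℕ) < k
  · have hk : (0 : ℝ) < k := by norm_cast; omega
    have hrow : -δ / k ≤ (SM k d *ᵥ y) i := by
      calc -δ / k ≤ -(y 0 - y i) / k := by gcongr; exact hspread i hi
        _ ≤ (SM k d *ᵥ y) i := neg_sub_div_le_SM_mulVec hkd hy hi
    calc (0 : ℝ) = 1 / δ * (-δ / k) + 1 / k := by field_simp; ring
      _ ≤ 1 / δ * (SM k d *ᵥ y) i + 1 / k := by gcongr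
      _ = _ := by rw [if_pos (by omega)]
  · rw [SM_mulVec_eq_zero y (not_lt.1 hi), if_neg (by omega)]
    simp

theorem sum_sortedPLSoftMax (hk : k ≠ 0) (hkd : k ≤ d) : ∑ i, sortedPLSoftMax δ k y i = 1 := by
  simp only [sortedPLSoftMax, Pi.add_apply, Pi.smul_apply, smul_eq_mul]
  rw [sum_add_distrib, ← mul_sum, sum_SM_mulVec hkd, sum_uvec hk hkd, mul_zero, zero_add]

end sortedPLSoftMax

/-- For every `x` and every sorting permutation `π` of `x`, the vector
`PLSoftMax^δ(x)` lies in the simplex: coordinates are nonnegative and sum to `1`. -/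
theorem plsoftmax_mem_simplex (d : ℕ) (hd : 1 ≤ d) (δ : ℝ) (hδ : 0 < δ)
    (x : Fin d → ℝ) (π : Equiv.Perm (Fin d)) (hπ : Sorts x π) :
    (∀ i, 0 ≤ PLSoftMax δ x π i) ∧ ∑ i, PLSoftMax δ x π i = 1 := by
  have : NeZero d := ⟨by omega⟩
  have hk : kx δ x π ≠ 0 := (kx_pos hδ.le).ne'
  have hkd : kx δ x π ≤ d := kx_le hδ.le
  have hspread : ∀ i : Fin d, (i : ℕ) < kx δ x π → (x ∘ π) 0 - (x ∘ π) i ≤ δ :=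
    fun _ hi => sub_le_of_lt_kx hδ.le hπ hi
  rw [PLSoftMax_eq_sortedPLSoftMax_comp]
  refine ⟨fun i => sortedPLSoftMax_nonneg hδ hkd hπ hspread _, ?_⟩
  simp only [Function.comp_apply]
  rw [Equiv.sum_comp π⁻¹ (sortedPLSoftMax δ (kx δ x π) (x ∘ π))]
  exact sum_sortedPLSoftMax hk hkd
end

section
/- Let δ > 0, k ∈ ℕ, and d = 2^(2^k). If f : ℝ^d → Δ_{d−1} is a δ-approximate soft-max function satisfying ‖f(x) − f(y)‖_1 ≤ c · ‖x − y‖_∞ for all x, y ∈ ℝ^d, then c ≥ log₂(d) / (8δ). -/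
open Finset

private def flipv : Fin 2 → Fin 2 := fun x => if x = 0 then 1 else 0

private lemma flipv_flipv : ∀ x : Fin 2, flipv (flipv x) = x := by decide

private lemma eq_iff_ne_flipv : ∀ z x : Fin 2, z = x ↔ ¬ z = flipv x := by decide

private theorem softmax_aux (m : ℕ) (hmpos : 0 < m) (δ : ℝ) (hδ : 0 < δ)
    (f : (Fin (2 ^ m) → ℝ) → Fin (2 ^ m) → ℝ) (c : ℝ)
    (hsimplex : ∀ x, (∀ i, 0 ≤ f x i) ∧ ∑ i, f x i = 1)
    (happrox : ∀ x : Fin (2 ^ m) → ℝ, ∑ i, x i * f x i ≥ (⨆ i, x i) - δ)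
    (hlip : ∀ x y : Fin (2 ^ m) → ℝ, ∑ i, |f x i - f y i| ≤ c * ⨆ i, |x i - y i|) :
    (m : ℝ) ≤ 4 * δ * c := by
  have hdpos : 0 < 2 ^ m := by positivity
  haveI : Nonempty (Fin (2 ^ m)) := ⟨⟨0, hdpos⟩⟩
  have hm0 : (0:ℝ) < m := by exact_mod_cast hmpos
  have hsum1 : ∀ x, ∑ i, f x i = 1 := fun x => (hsimplex x).2
  -- c is nonnegative
  have hc0 : 0 ≤ c := by
    have h := hlip (fun _ => 0) (fun _ => 1)
    have h0 : (0:ℝ) ≤ ∑ j, |f (fun _ => (0:ℝ)) j - f (fun _ => (1:ℝ)) j| :=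
      Finset.sum_nonneg fun _ _ => abs_nonneg _
    norm_num [ciSup_const] at h
    linarith
  set t : ℝ := 4 * δ / m with ht
  have htpos : 0 < t := by positivity
  set e := (finFunctionFinEquiv : (Fin m → Fin 2) ≃ Fin (2 ^ m)) with he
  set ag : (Fin m → Fin 2) → Fin (2 ^ m) → ℝ :=
    fun s j => ∑ i : Fin m, if e.symm j i = s i then (1:ℝ) else 0 with hag
  set X : (Fin m → Fin 2) → Fin (2 ^ m) → ℝ := fun s j => t * ag s j with hX
  set wr : (Fin m → Fin 2) → Fin m → ℝ :=
    fun s i => ∑ j, f (X s) j * (if e.symm j i = s i then (0:ℝ) else 1) with hwr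
  -- Step A: slack bound
  have lemA : ∀ s, t * ∑ i, wr s i ≤ δ := by
    intro s
    have hag2 : ∀ j, ag s j + (∑ i : Fin m, if e.symm j i = s i then (0:ℝ) else 1) = m := by
      intro j
      rw [hag]
      rw [← Finset.sum_add_distrib]
      have hcongr : ∀ i ∈ univ, ((if e.symm j i = s i then (1:ℝ) else 0)
          + (if e.symm j i = s i then (0:ℝ) else 1)) = 1 := by
        intro i _; split_ifs <;> norm_num
      rw [Finset.sum_congr rfl hcongr]
      simp
    have h1 : ∑ j, X s j * f (X s) j = t * ((m:ℝ) - ∑ i, wr s i) := by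
      have e1 : ∑ j, X s j * f (X s) j = t * ∑ j, ag s j * f (X s) j := by
        rw [Finset.mul_sum]
        exact Finset.sum_congr rfl fun j _ => by rw [hX]; ring
      have e2 : ∑ j, ag s j * f (X s) j = (m:ℝ) - ∑ i, wr s i := by
        have e3 : ∀ j ∈ univ, ag s j * f (X s) j =
            (m:ℝ) * f (X s) j - ∑ i : Fin m, (if e.symm j i = s i then (0:ℝ) else 1) * f (X s) j := by
          intro j _
          have h' : ag s j = (m:ℝ) - ∑ i : Fin m, (if e.symm j i = s i then (0:ℝ) else 1) := by
            linarith [hag2 j]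
          rw [← Finset.sum_mul, h']
          ring
        rw [Finset.sum_congr rfl e3, Finset.sum_sub_distrib, ← Finset.mul_sum, hsum1, mul_one,
          Finset.sum_comm]
        congr 1
        refine Finset.sum_congr rfl fun i _ => ?_
        rw [hwr]
        exact Finset.sum_congr rfl fun j _ => by ring
      rw [e1, e2]
    have hach : X s (e s) = t * m := by
      rw [hX, hag]
      simp [Equiv.symm_apply_apply]
    have hbdd : BddAbove (Set.range (X s)) := (Set.finite_range _).bddAbove
    have hsup : t * m ≤ ⨆ j, X s j := hach ▸ le_ciSup hbdd (e s)
    have happ := happrox (X s)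
    rw [h1] at happ
    nlinarith [happ, hsup]
  -- Step B: pair inequality
  have lemB : ∀ (s : Fin m → Fin 2) (i : Fin m),
      2 * (1 - wr s i - wr (Function.update s i (flipv (s i))) i) ≤ c * t := by
    intro s i
    set s' := Function.update s i (flipv (s i)) with hs'
    have hXdiff : ∀ j, |X s j - X s' j| ≤ t := by
      intro j
      have h1 : X s j - X s' j = t * (∑ i' : Fin m,
          ((if e.symm j i' = s i' then (1:ℝ) else 0) - (if e.symm j i' = s' i' then (1:ℝ) else 0))) := by
        rw [hX, hag, Finset.sum_sub_distrib]
        ring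
      have h2 : (∑ i' : Fin m,
          ((if e.symm j i' = s i' then (1:ℝ) else 0) - (if e.symm j i' = s' i' then (1:ℝ) else 0)))
          = ((if e.symm j i = s i then (1:ℝ) else 0) - (if e.symm j i = s' i then (1:ℝ) else 0)) := by
        rw [Finset.sum_eq_single i]
        · intro b _ hb
          rw [hs', Function.update_of_ne hb, sub_self]
        · intro h; exact absurd (Finset.mem_univ i) h
      have h3 : |(if e.symm j i = s i then (1:ℝ) else 0) - (if e.symm j i = s' i then (1:ℝ) else 0)| ≤ 1 := by
        split_ifs <;> norm_num
      calc |X s j - X s' j| = t * |(if e.symm j i = s i then (1:ℝ) else 0)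
            - (if e.symm j i = s' i then (1:ℝ) else 0)| := by
            rw [h1, h2, abs_mul, abs_of_nonneg htpos.le]
        _ ≤ t * 1 := mul_le_mul_of_nonneg_left h3 htpos.le
        _ = t := mul_one t
    have hsupb : (⨆ j, |X s j - X s' j|) ≤ t := ciSup_le hXdiff
    have hL : ∑ j, |f (X s) j - f (X s') j| ≤ c * t :=
      le_trans (hlip _ _) (mul_le_mul_of_nonneg_left hsupb hc0)
    have ha : ∑ j, f (X s) j * (if e.symm j i = s i then (1:ℝ) else 0) = 1 - wr s i := by
      have hterm : ∀ j ∈ univ, f (X s) j * (if e.symm j i = s i then (1:ℝ) else 0)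
          = f (X s) j - f (X s) j * (if e.symm j i = s i then (0:ℝ) else 1) := by
        intro j _; split_ifs <;> ring
      rw [Finset.sum_congr rfl hterm, Finset.sum_sub_distrib, hsum1]
    have hb : ∑ j, f (X s') j * (if e.symm j i = s i then (1:ℝ) else 0) = wr s' i := by
      rw [hwr]
      refine Finset.sum_congr rfl fun j _ => ?_
      congr 1
      have hsi' : s' i = flipv (s i) := by rw [hs', Function.update_self]
      rw [hsi']
      by_cases h : e.symm j i = s i
      · rw [if_pos h, if_neg ((eq_iff_ne_flipv _ _).mp h)]
      · rw [if_neg h, if_pos (not_not.mp (mt (eq_iff_ne_flipv _ _).mpr h))]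
    have hper : ∀ j ∈ univ, (f (X s) j - f (X s') j)
        * (2 * (if e.symm j i = s i then (1:ℝ) else 0) - 1) ≤ |f (X s) j - f (X s') j| := by
      intro j _
      have h1 := le_abs_self (f (X s) j - f (X s') j)
      have h2 := neg_abs_le (f (X s) j - f (X s') j)
      split_ifs <;> nlinarith
    have hsum2 : ∑ j, (f (X s) j - f (X s') j)
        * (2 * (if e.symm j i = s i then (1:ℝ) else 0) - 1)
        = 2 * ((1 - wr s i) - wr s' i) := by
      have hterm : ∀ j ∈ univ, (f (X s) j - f (X s') j)
          * (2 * (if e.symm j i = s i then (1:ℝ) else 0) - 1)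
          = (2 * (f (X s) j * (if e.symm j i = s i then (1:ℝ) else 0))
            - 2 * (f (X s') j * (if e.symm j i = s i then (1:ℝ) else 0)))
            - (f (X s) j - f (X s') j) := by
        intro j _; ring
      rw [Finset.sum_congr rfl hterm]
      simp only [Finset.sum_sub_distrib, ← Finset.mul_sum]
      rw [ha, hb, hsum1, hsum1]
      ring
    calc 2 * (1 - wr s i - wr s' i) = ∑ j, (f (X s) j - f (X s') j)
          * (2 * (if e.symm j i = s i then (1:ℝ) else 0) - 1) := by rw [hsum2]
      _ ≤ ∑ j, |f (X s) j - f (X s') j| := Finset.sum_le_sum hper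
      _ ≤ c * t := hL
  -- Step C: averaging
  set N : ℝ := (Fintype.card (Fin m → Fin 2) : ℝ) with hN
  have hNpos : 0 < N := by
    rw [hN]
    exact_mod_cast Fintype.card_pos
  set A : ℝ := ∑ s : Fin m → Fin 2, ∑ i, wr s i with hA
  have hAle : A ≤ N * (δ / t) := by
    rw [hA]
    calc ∑ s : Fin m → Fin 2, ∑ i, wr s i ≤ ∑ _s : Fin m → Fin 2, δ / t := by
          refine Finset.sum_le_sum fun s _ => ?_
          have hsle := lemA s
          rw [mul_comm] at hsle
          exact (le_div_iff₀ htpos).mpr hsle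
      _ = N * (δ / t) := by rw [Finset.sum_const, card_univ, hN, nsmul_eq_mul]
  have hflipsum : ∑ s : Fin m → Fin 2, ∑ i : Fin m,
      wr (Function.update s i (flipv (s i))) i = A := by
    calc ∑ s : Fin m → Fin 2, ∑ i : Fin m, wr (Function.update s i (flipv (s i))) i
        = ∑ i : Fin m, ∑ s : Fin m → Fin 2, wr (Function.update s i (flipv (s i))) i :=
          Finset.sum_comm
      _ = ∑ i : Fin m, ∑ s : Fin m → Fin 2, wr s i := by
          refine Finset.sum_congr rfl fun i _ => ?_
          have hinv : Function.Involutive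
              (fun s : Fin m → Fin 2 => Function.update s i (flipv (s i))) := by
            intro s
            funext b
            by_cases hb : b = i
            · subst hb; simp [Function.update_self, flipv_flipv]
            · simp [Function.update_of_ne hb]
          exact hinv.bijective.sum_comp (fun s => wr s i)
      _ = ∑ s : Fin m → Fin 2, ∑ i : Fin m, wr s i := Finset.sum_comm
      _ = A := by rw [hA]
  have total : 2 * (N * m) - 2 * A - 2 * A ≤ N * ((m:ℝ) * (c * t)) := by
    have t1 : ∀ s : Fin m → Fin 2,
        ∑ i : Fin m, (2 * (1 - wr s i - wr (Function.update s i (flipv (s i))) i))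
        = 2 * (m:ℝ) - 2 * (∑ i, wr s i)
          - 2 * (∑ i : Fin m, wr (Function.update s i (flipv (s i))) i) := by
      intro s
      have hterm : ∀ i ∈ univ, (2 * (1 - wr s i - wr (Function.update s i (flipv (s i))) i))
          = (2:ℝ) - 2 * wr s i - 2 * wr (Function.update s i (flipv (s i))) i := by
        intro i _; ring
      rw [Finset.sum_congr rfl hterm, Finset.sum_sub_distrib, Finset.sum_sub_distrib,
        ← Finset.mul_sum, ← Finset.mul_sum, Finset.sum_const, card_univ]
      simp [mul_comm]
    have t2 : ∑ s : Fin m → Fin 2,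
        ∑ i : Fin m, (2 * (1 - wr s i - wr (Function.update s i (flipv (s i))) i))
        ≤ ∑ _s : Fin m → Fin 2, (m:ℝ) * (c * t) := by
      refine Finset.sum_le_sum fun s _ => ?_
      calc ∑ i : Fin m, (2 * (1 - wr s i - wr (Function.update s i (flipv (s i))) i))
          ≤ ∑ _i : Fin m, c * t := Finset.sum_le_sum fun i _ => lemB s i
        _ = (m:ℝ) * (c * t) := by rw [Finset.sum_const, card_univ]; simp
    have t3 : ∑ s : Fin m → Fin 2,
        ∑ i : Fin m, (2 * (1 - wr s i - wr (Function.update s i (flipv (s i))) i))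
        = 2 * (N * m) - 2 * A - 2 * A := by
      rw [Finset.sum_congr rfl fun s _ => t1 s]
      simp only [Finset.sum_sub_distrib, ← Finset.mul_sum, Finset.sum_const, card_univ,
        nsmul_eq_mul]
      rw [hflipsum, ← hA, ← hN]
    calc 2 * (N * m) - 2 * A - 2 * A = _ := t3.symm
      _ ≤ ∑ _s : Fin m → Fin 2, (m:ℝ) * (c * t) := t2
      _ = N * ((m:ℝ) * (c * t)) := by rw [Finset.sum_const, card_univ, hN, nsmul_eq_mul]
  -- combine
  have h1 : N * (2 * (m:ℝ) - 4 * (δ / t)) ≤ N * ((m:ℝ) * (c * t)) := by nlinarith [hAle, total]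
  have h2 : 2 * (m:ℝ) - 4 * (δ / t) ≤ (m:ℝ) * (c * t) := le_of_mul_le_mul_left h1 hNpos
  have hdt : δ / t = (m:ℝ) / 4 := by
    rw [ht]
    field_simp
  have hmt : (m:ℝ) * (c * t) = 4 * δ * c := by
    rw [ht]
    field_simp
  rw [hdt, hmt] at h2
  linarith

/-- Any `δ`-approximate soft-max function on `d = 2^(2^k)` alternatives that is
`(ℓ_∞, ℓ_1)`-Lipschitz with constant `c` must have `c ≥ log₂(d)/(8δ)`. -/
theorem linf_l1_lipschitz_lower_bound (k : ℕ) (δ : ℝ) (hδ : 0 < δ) (d : ℕ)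
    (hd : d = 2 ^ (2 ^ k)) (f : (Fin d → ℝ) → Fin d → ℝ) (c : ℝ)
    (hsimplex : ∀ x, (∀ i, 0 ≤ f x i) ∧ ∑ i, f x i = 1)
    (happrox : ∀ x : Fin d → ℝ, ∑ i, x i * f x i ≥ (⨆ i, x i) - δ)
    (hlip : ∀ x y : Fin d → ℝ, ∑ i, |f x i - f y i| ≤ c * ⨆ i, |x i - y i|) :
    c ≥ Real.logb 2 d / (8 * δ) := by
  subst hd
  have key := softmax_aux (2 ^ k) (by positivity) δ hδ f c hsimplex happrox hlip
  have hc0 : 0 ≤ c := by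
    nlinarith [key, (by positivity : (0:ℝ) < ((2:ℕ)^k : ℝ))]
  have hlogb : Real.logb 2 ((2 ^ 2 ^ k : ℕ) : ℝ) = (2 ^ k : ℕ) := by
    push_cast
    rw [Real.logb, Real.log_pow]
    rw [mul_div_assoc, div_self (Real.log_pos (by norm_num)).ne', mul_one]
    push_cast
    ring
  rw [ge_iff_le, hlogb, div_le_iff₀ (by positivity)]
  nlinarith [mul_nonneg hδ.le hc0]
end

section
/- Let d ≥ 2, λ > 0, and p ≥ 1. If c is a constant such that ‖Exp^λ(x) − Exp^λ(y)‖_1 ≤ c · ‖x − y‖_p for all x, y ∈ ℝ^d, then c ≥ 2λ · d(d−1)/(2d−1)²; in particular c ≥ 4λ/9. -/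
open Finset

/-!
Along the line `s ↦ Pi.single i s` the exponential mechanism only moves mass between coordinate
`i` and the other `d - 1` coordinates, which all carry the same mass. Hence its `ℓ₁`
displacement is twice that of `σ(s) = e^{λs} / (e^{λs} + d - 1)`, while the `ℓ_p` displacement
of the input is `|s - s'|`. A Lipschitz constant `c` of the mechanism therefore makes `σ`
`(c/2)`-Lipschitz, so `c ≥ 2σ'(s) = 2λσ(s)(1 - σ(s))` for every `s`; the point `e^{λs} = d`,
where `σ(s) = d / (2d - 1)`, gives the bound.
-/

/-- The exponential soft-max mechanism with parameter `lam`. -/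
noncomputable def expMech {d : ℕ} (lam : ℝ) (x : Fin d → ℝ) : Fin d → ℝ :=
  fun i => Real.exp (lam * x i) / ∑ j, Real.exp (lam * x j)

noncomputable def singleMass (d : ℕ) (lam s : ℝ) : ℝ :=
  Real.exp (lam * s) / (Real.exp (lam * s) + (d - 1))

section

variable {d : ℕ} (lam : ℝ)

lemma sum_exp_mul_single (i : Fin d) (s : ℝ) :
    ∑ j, Real.exp (lam * (Pi.single i s : Fin d → ℝ) j) = Real.exp (lam * s) + (d - 1) := by
  have hexp (j : Fin d) :
      Real.exp (lam * (Pi.single i s : Fin d → ℝ) j)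
        = 1 + (Pi.single i (Real.exp (lam * s) - 1) : Fin d → ℝ) j := by
    rcases eq_or_ne j i with rfl | hj
    · simp
    · simp [hj]
  simp only [hexp, sum_add_distrib, sum_pi_single', mem_univ, if_true]
  rw [sum_const, card_univ, Fintype.card_fin, nsmul_one]
  ring

lemma expMech_single_self (i : Fin d) (s : ℝ) :
    expMech lam (Pi.single i s) i = singleMass d lam s := by
  simp [expMech, singleMass, sum_exp_mul_single]

lemma expMech_single_of_ne {i j : Fin d} (hj : j ≠ i) (s : ℝ) :
    expMech lam (Pi.single i s) j = 1 / (Real.exp (lam * s) + (d - 1)) := by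
  simp [expMech, sum_exp_mul_single, hj]

lemma exp_mul_add_pos (hd : 1 ≤ d) (s : ℝ) : 0 < Real.exp (lam * s) + (d - 1) := by
  have : (1 : ℝ) ≤ d := Nat.one_le_cast.mpr hd
  positivity

lemma one_sub_singleMass (hd : 1 ≤ d) (s : ℝ) :
    1 - singleMass d lam s = (d - 1) * (1 / (Real.exp (lam * s) + (d - 1))) := by
  have := (exp_mul_add_pos lam hd s).ne'
  rw [singleMass]
  field_simp
  ring

lemma sum_abs_expMech_single_sub (i : Fin d) (s t : ℝ) :
    ∑ j, |expMech lam (Pi.single i s) j - expMech lam (Pi.single i t) j|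
      = 2 * |singleMass d lam s - singleMass d lam t| := by
  have hd : 1 ≤ d := i.pos
  set Z : ℝ → ℝ := fun s => Real.exp (lam * s) + (d - 1)
  have hrest : ∑ j ∈ {i}ᶜ, |expMech lam (Pi.single i s) j - expMech lam (Pi.single i t) j|
      = |singleMass d lam s - singleMass d lam t| := by
    calc _ = ∑ j ∈ ({i}ᶜ : Finset (Fin d)), |1 / Z s - 1 / Z t| := by
          refine sum_congr rfl fun j hj => ?_
          have hji : j ≠ i := by simpa using hj
          rw [expMech_single_of_ne lam hji, expMech_single_of_ne lam hji]
      _ = |(d - 1) * (1 / Z s) - (d - 1) * (1 / Z t)| := by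
          have hd1 : (1 : ℝ) ≤ d := Nat.one_le_cast.mpr hd
          rw [sum_const, card_compl, card_singleton, Fintype.card_fin, nsmul_eq_mul, ← mul_sub,
            abs_mul, Nat.cast_sub hd, Nat.cast_one,
            abs_of_nonneg (by linarith : (0 : ℝ) ≤ d - 1)]
      _ = |singleMass d lam s - singleMass d lam t| := by
          rw [← one_sub_singleMass lam hd, ← one_sub_singleMass lam hd, abs_sub_comm]
          ring_nf
  rw [Fintype.sum_eq_add_sum_compl i, expMech_single_self, expMech_single_self, hrest]
  ring

end

lemma pnorm_single {d : ℕ} {p : ℝ} (hp : p ≠ 0) (i : Fin d) (r : ℝ) :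
    pnorm p (Pi.single i r) = |r| := by
  have hpow (j : Fin d) :
      |(Pi.single i r : Fin d → ℝ) j| ^ p = (Pi.single i (|r| ^ p) : Fin d → ℝ) j := by
    rcases eq_or_ne j i with rfl | hj
    · simp
    · simp [hj, Real.zero_rpow hp]
  simp only [pnorm, hpow, sum_pi_single', mem_univ, if_true]
  rw [← Real.rpow_mul (abs_nonneg r), mul_one_div_cancel hp, Real.rpow_one]

lemma hasDerivAt_singleMass {d : ℕ} (hd : 1 ≤ d) (lam s : ℝ) :
    HasDerivAt (singleMass d lam) (lam * (singleMass d lam s * (1 - singleMass d lam s))) s := by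
  have hexp : HasDerivAt (fun s => Real.exp (lam * s)) (Real.exp (lam * s) * lam) s := by
    simpa using ((hasDerivAt_id s).const_mul lam).exp
  refine (hexp.div (hexp.add_const _) (exp_mul_add_pos lam hd s).ne').congr_deriv ?_
  rw [one_sub_singleMass lam hd, singleMass]
  field_simp
  ring

lemma two_mul_abs_mul_singleMass_le {d : ℕ} (hd : 1 ≤ d) {lam p c : ℝ} (hp : p ≠ 0)
    (hlip : ∀ x y : Fin d → ℝ,
      ∑ i, |expMech lam x i - expMech lam y i| ≤ c * pnorm p (x - y)) (s : ℝ) :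
    2 * |lam| * (singleMass d lam s * (1 - singleMass d lam s)) ≤ c := by
  have i : Fin d := ⟨0, hd⟩
  have hσ (t u : ℝ) : 2 * |singleMass d lam t - singleMass d lam u| ≤ c * |t - u| := by
    simpa [sum_abs_expMech_single_sub, ← Pi.single_sub, pnorm_single hp] using
      hlip (Pi.single i t) (Pi.single i u)
  have hc : 0 ≤ c := by
    have h := hσ 1 0
    norm_num at h
    linarith [abs_nonneg (singleMass d lam 1 - singleMass d lam 0)]
  have hderiv := norm_deriv_le_of_lip' (f := singleMass d lam) (x₀ := s)
    (div_nonneg hc zero_le_two) (Filter.Eventually.of_forall fun t => by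
      rw [Real.norm_eq_abs, Real.norm_eq_abs]; linarith [hσ t s])
  have hmass : 0 ≤ singleMass d lam s * (1 - singleMass d lam s) := by
    have hd1 : (1 : ℝ) ≤ d := Nat.one_le_cast.mpr hd
    have := exp_mul_add_pos lam hd s
    rw [one_sub_singleMass lam hd, singleMass]
    positivity
  rw [(hasDerivAt_singleMass hd lam s).deriv, norm_mul, Real.norm_eq_abs, Real.norm_eq_abs,
    abs_of_nonneg hmass] at hderiv
  linarith

lemma singleMass_log_div {d : ℕ} {lam : ℝ} (hd : 1 ≤ d) (hlam : lam ≠ 0) :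
    singleMass d lam (Real.log d / lam) = d / (2 * d - 1) := by
  rw [singleMass, mul_div_cancel₀ _ hlam, Real.exp_log (by positivity)]
  ring

/-- Any `(ℓ_p, ℓ_1)`-Lipschitz constant `c` for the exponential mechanism satisfies
`c ≥ 2λ·d(d−1)/(2d−1)²`; in particular `c ≥ 4λ/9`. -/
theorem exp_mech_l1_lipschitz_lower_bound (d : ℕ) (hd : 2 ≤ d) (lam p : ℝ)
    (hlam : 0 < lam) (hp : 1 ≤ p) (c : ℝ)
    (hlip : ∀ x y : Fin d → ℝ,
      ∑ i, |expMech lam x i - expMech lam y i| ≤ c * pnorm p (x - y)) :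
    c ≥ 2 * lam * ((d : ℝ) * ((d : ℝ) - 1)) / (2 * (d : ℝ) - 1) ^ 2 ∧
      c ≥ 4 * lam / 9 := by
  have hd1 : 1 ≤ d := by omega
  have hd2 : (2 : ℝ) ≤ d := by exact_mod_cast hd
  have hbound := two_mul_abs_mul_singleMass_le hd1 (by linarith) hlip (Real.log d / lam)
  rw [singleMass_log_div hd1 hlam.ne', abs_of_pos hlam] at hbound
  have h2d : (2 * d - 1 : ℝ) ≠ 0 := by linarith
  have hL : 2 * lam * ((d : ℝ) * ((d : ℝ) - 1)) / (2 * (d : ℝ) - 1) ^ 2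
      = 2 * lam * (d / (2 * d - 1) * (1 - d / (2 * d - 1))) := by
    field_simp
    ring
  have h49 : 4 * lam / 9 ≤ 2 * lam * ((d : ℝ) * ((d : ℝ) - 1)) / (2 * (d : ℝ) - 1) ^ 2 := by
    rw [div_le_div_iff₀ (by norm_num) (by nlinarith)]
    nlinarith [mul_nonneg (mul_nonneg hlam.le (by linarith : (0 : ℝ) ≤ d - 2))
      (by linarith : (0 : ℝ) ≤ d + 1)]
  exact ⟨hL ▸ hbound, by linarith⟩
end

section
/- Let δ > 0, p, q ≥ 1, β > 0, and let f : ℝ^d → Δ_{d−1} be a soft-max function that is δ-approximate and satisfies ‖f(x) − f(y)‖_q ≤ β · ‖x − y‖_p for all x, y ∈ ℝ^d. Define Logf : ℝ₊^d → Δ_{d−1} by Logf(x) = f(log x), where log x = (log x_1, …, log x_d). Then (i) Logf is δ-multiplicative-approximate: ⟨x, Logf(x)⟩ ≥ (1 − δ) · max_i x_i for all x with all coordinates positive; and (ii) ‖Logf(x) − Logf(y)‖_q ≤ β · ‖log x − log y‖_p for all x, y with all coordinates positive. -/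
open Finset

/-- If `f` is a `δ`-approximate soft-max function that is `(ℓ_p, ℓ_q)`-Lipschitz with
constant `β`, then `Logf(x) := f(log x)` is `δ`-multiplicative-approximate and satisfies
`‖Logf(x) − Logf(y)‖_q ≤ β·‖log x − log y‖_p` on the positive orthant. -/
theorem log_transform_multiplicative (d : ℕ) (δ β p q : ℝ) (hδ : 0 < δ) (hβ : 0 < β)
    (hp : 1 ≤ p) (hq : 1 ≤ q) (f : (Fin d → ℝ) → Fin d → ℝ)
    (hsimplex : ∀ x, (∀ i, 0 ≤ f x i) ∧ ∑ i, f x i = 1)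
    (happrox : ∀ x : Fin d → ℝ, ∑ i, x i * f x i ≥ (⨆ i, x i) - δ)
    (hlip : ∀ x y : Fin d → ℝ, pnorm q (f x - f y) ≤ β * pnorm p (x - y)) :
    (∀ x : Fin d → ℝ, (∀ i, 0 < x i) →
        ∑ i, x i * f (fun i => Real.log (x i)) i ≥ (1 - δ) * ⨆ i, x i) ∧
    (∀ x y : Fin d → ℝ, (∀ i, 0 < x i) → (∀ i, 0 < y i) →
        pnorm q (f (fun i => Real.log (x i)) - f (fun i => Real.log (y i))) ≤
          β * pnorm p (fun i => Real.log (x i) - Real.log (y i))) := by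
  constructor
  · intro x hx
    rcases Nat.eq_zero_or_pos d with hd | hd
    · subst hd
      simp [Real.iSup_of_isEmpty]
    have : Nonempty (Fin d) := ⟨⟨0, hd⟩⟩
    -- let M be the max of x, attained at i₀
    obtain ⟨i₀, -, hi₀⟩ := Finset.exists_max_image Finset.univ x ⟨⟨0, hd⟩, Finset.mem_univ _⟩
    have hM : (⨆ i, x i) = x i₀ := by
      apply le_antisymm
      · exact ciSup_le fun i => hi₀ i (Finset.mem_univ i)
      · exact le_ciSup (Set.Finite.bddAbove (Set.finite_range x)) i₀
    set L : Fin d → ℝ := fun i => Real.log (x i) with hL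
    set w : Fin d → ℝ := f L with hw
    have hw0 : ∀ i, 0 ≤ w i := (hsimplex L).1
    have hw1 : ∑ i, w i = 1 := (hsimplex L).2
    -- Jensen: exp (∑ w i * L i) ≤ ∑ w i * x i
    have jensen : Real.exp (∑ i, w i * L i) ≤ ∑ i, x i * w i := by
      have := convexOn_exp.map_sum_le (t := Finset.univ) (w := w) (p := L)
        (fun i _ => hw0 i) hw1 (fun i _ => Set.mem_univ _)
      simp only [smul_eq_mul] at this
      refine this.trans (le_of_eq ?_)
      apply Finset.sum_congr rfl
      intro i _
      rw [hL]
      rw [Real.exp_log (hx i)]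
      ring
    -- happrox at L
    have h1 : ∑ i, L i * w i ≥ (⨆ i, L i) - δ := happrox L
    have h2 : Real.log (x i₀) ≤ ⨆ i, L i :=
      le_ciSup (Set.Finite.bddAbove (Set.finite_range L)) i₀
    have h3 : Real.log (x i₀) - δ ≤ ∑ i, w i * L i := by
      have : ∑ i, L i * w i = ∑ i, w i * L i := by
        apply Finset.sum_congr rfl; intro i _; ring
      linarith
    have h4 : x i₀ * Real.exp (-δ) ≤ Real.exp (∑ i, w i * L i) := by
      calc x i₀ * Real.exp (-δ) = Real.exp (Real.log (x i₀) - δ) := by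
            rw [Real.exp_sub, Real.exp_log (hx i₀)]
            rw [Real.exp_neg]
            field_simp
          _ ≤ _ := Real.exp_le_exp.mpr h3
    have h5 : (1 - δ) * x i₀ ≤ x i₀ * Real.exp (-δ) := by
      have := Real.add_one_le_exp (-δ)
      nlinarith [(hx i₀).le]
    rw [hM]
    calc (1 - δ) * x i₀ ≤ x i₀ * Real.exp (-δ) := h5
      _ ≤ Real.exp (∑ i, w i * L i) := h4
      _ ≤ ∑ i, x i * w i := jensen
  · intro x y hx hy
    exact hlip _ _
end

section
/- Let f : ℝ^d → ℝ^d be continuous and piecewise linear, with finite partition P_1, …, P_L of ℝ^d into convex sets such that on each P_i, f(x) = A_i x + b_i for a matrix A_i ∈ ℝ^{d×d} and a vector b_i ∈ ℝ^d. Then for all p, q ≥ 1 and all x, y ∈ ℝ^d, ‖f(x) − f(y)‖_q ≤ (max_{1 ≤ i ≤ L} ‖A_i‖_{p,q}) · ‖x − y‖_p. -/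
open Finset

/-- The `(p, q)`-subordinate norm `‖A‖_{p,q} = sup_{x ≠ 0} ‖Ax‖_q / ‖x‖_p`. -/
noncomputable def subNorm {d : ℕ} (p q : ℝ) (A : Matrix (Fin d) (Fin d) ℝ) : ℝ :=
  sSup {r : ℝ | ∃ x : Fin d → ℝ, x ≠ 0 ∧ r = pnorm q (A.mulVec x) / pnorm p x}

lemma pnorm_nonneg {d : ℕ} (p : ℝ) (z : Fin d → ℝ) : 0 ≤ pnorm p z :=
  Real.rpow_nonneg (Finset.sum_nonneg fun i _ => Real.rpow_nonneg (abs_nonneg _) _) _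

lemma pnorm_neg {d : ℕ} (p : ℝ) (z : Fin d → ℝ) : pnorm p (-z) = pnorm p z := by
  simp [pnorm]

lemma pnorm_zero {d : ℕ} {p : ℝ} (hp : 1 ≤ p) : pnorm p (0 : Fin d → ℝ) = 0 := by
  have hp0 : p ≠ 0 := (one_pos.trans_le hp).ne'
  simp [pnorm, Real.zero_rpow hp0, Real.zero_rpow (one_div_ne_zero hp0), Real.zero_rpow (inv_ne_zero hp0)]

lemma pnorm_abs_le {d : ℕ} {p : ℝ} (hp : 1 ≤ p) (z : Fin d → ℝ) (j : Fin d) :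
    |z j| ≤ pnorm p z := by
  have hp0 : 0 < p := one_pos.trans_le hp
  have h1 : (|z j| ^ p) ^ (1/p) = |z j| := by
    rw [← Real.rpow_mul (abs_nonneg _), mul_one_div_cancel hp0.ne', Real.rpow_one]
  rw [← h1]
  apply Real.rpow_le_rpow (Real.rpow_nonneg (abs_nonneg _) _)
  · exact Finset.single_le_sum (fun i _ => Real.rpow_nonneg (abs_nonneg _) _) (Finset.mem_univ j)
  · positivity

lemma pnorm_pos {d : ℕ} {p : ℝ} (hp : 1 ≤ p) {z : Fin d → ℝ} (hz : z ≠ 0) :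
    0 < pnorm p z := by
  obtain ⟨j, hj⟩ := Function.ne_iff.mp hz
  exact lt_of_lt_of_le (abs_pos.mpr hj) (pnorm_abs_le hp z j)

lemma pnorm_smul {d : ℕ} {p : ℝ} (hp : 1 ≤ p) {t : ℝ} (ht : 0 ≤ t) (z : Fin d → ℝ) :
    pnorm p (t • z) = t * pnorm p z := by
  have hp0 : 0 < p := one_pos.trans_le hp
  unfold pnorm
  have h : ∀ i : Fin d, |(t • z) i| ^ p = t ^ p * |z i| ^ p := by
    intro i
    simp only [Pi.smul_apply, smul_eq_mul, abs_mul, abs_of_nonneg ht]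
    rw [Real.mul_rpow ht (abs_nonneg _)]
  simp_rw [h, ← Finset.mul_sum]
  rw [Real.mul_rpow (Real.rpow_nonneg ht _)
      (Finset.sum_nonneg fun i _ => Real.rpow_nonneg (abs_nonneg _) _),
    ← Real.rpow_mul ht, mul_one_div_cancel hp0.ne', Real.rpow_one]

lemma pnorm_add_le {d : ℕ} {p : ℝ} (hp : 1 ≤ p) (a c : Fin d → ℝ) :
    pnorm p (a + c) ≤ pnorm p a + pnorm p c := by
  simpa [pnorm] using Real.Lp_add_le Finset.univ a c hp

lemma pnorm_continuous {d : ℕ} {p : ℝ} (hp : 1 ≤ p) :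
    Continuous fun z : Fin d → ℝ => pnorm p z := by
  have hp0 : 0 < p := one_pos.trans_le hp
  apply Continuous.rpow_const
  · exact continuous_finset_sum _ fun i _ =>
      ((continuous_apply i).abs.rpow_const fun x => Or.inr hp0.le)
  · exact fun x => Or.inr (by positivity)

lemma subNorm_nonneg {d : ℕ} (p q : ℝ) (A : Matrix (Fin d) (Fin d) ℝ) :
    0 ≤ subNorm p q A := by
  apply Real.sSup_nonneg
  rintro r ⟨x, hx, rfl⟩
  exact div_nonneg (pnorm_nonneg _ _) (pnorm_nonneg _ _)

lemma mulVec_pnorm_le {d : ℕ} {p q : ℝ} (hp : 1 ≤ p) (hq : 1 ≤ q)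
    (A : Matrix (Fin d) (Fin d) ℝ) (x : Fin d → ℝ) :
    pnorm q (A.mulVec x) ≤ (∑ i, (∑ j, |A i j|) ^ q) ^ (1/q) * pnorm p x := by
  have hq0 : 0 < q := one_pos.trans_le hq
  set N := pnorm p x with hN
  have hN0 : 0 ≤ N := pnorm_nonneg _ _
  have habs : ∀ i, |A.mulVec x i| ≤ (∑ j, |A i j|) * N := by
    intro i
    calc |A.mulVec x i| = |∑ j, A i j * x j| := rfl
      _ ≤ ∑ j, |A i j * x j| := Finset.abs_sum_le_sum_abs _ _
      _ = ∑ j, |A i j| * |x j| := by simp [abs_mul]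
      _ ≤ ∑ j, |A i j| * N := Finset.sum_le_sum fun j _ =>
          mul_le_mul_of_nonneg_left (pnorm_abs_le hp x j) (abs_nonneg _)
      _ = (∑ j, |A i j|) * N := (Finset.sum_mul _ _ _).symm
  have h1 : ∑ i, |A.mulVec x i| ^ q ≤ (∑ i, (∑ j, |A i j|) ^ q) * N ^ q := by
    rw [Finset.sum_mul]
    apply Finset.sum_le_sum
    intro i _
    rw [← Real.mul_rpow (Finset.sum_nonneg fun j _ => abs_nonneg _) hN0]
    exact Real.rpow_le_rpow (abs_nonneg _) (habs i) hq0.le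
  have hsum0 : (0:ℝ) ≤ ∑ i, (∑ j, |A i j|) ^ q :=
    Finset.sum_nonneg fun i _ => Real.rpow_nonneg (Finset.sum_nonneg fun j _ => abs_nonneg _) _
  calc pnorm q (A.mulVec x) ≤ ((∑ i, (∑ j, |A i j|) ^ q) * N ^ q) ^ (1/q) :=
        Real.rpow_le_rpow (Finset.sum_nonneg fun i _ => Real.rpow_nonneg (abs_nonneg _) _) h1
          (by positivity)
    _ = (∑ i, (∑ j, |A i j|) ^ q) ^ (1/q) * N := by
        rw [Real.mul_rpow hsum0 (Real.rpow_nonneg hN0 _), ← Real.rpow_mul hN0,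
          mul_one_div_cancel hq0.ne', Real.rpow_one]

lemma subNorm_spec {d : ℕ} {p q : ℝ} (hp : 1 ≤ p) (hq : 1 ≤ q)
    (A : Matrix (Fin d) (Fin d) ℝ) (u : Fin d → ℝ) :
    pnorm q (A.mulVec u) ≤ subNorm p q A * pnorm p u := by
  rcases eq_or_ne u 0 with rfl | hu
  · simp [Matrix.mulVec_zero, pnorm_zero hq, pnorm_zero hp]
  · have hpos : 0 < pnorm p u := pnorm_pos hp hu
    have hb : BddAbove {r : ℝ | ∃ x : Fin d → ℝ, x ≠ 0 ∧ r = pnorm q (A.mulVec x) / pnorm p x} := by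
      refine ⟨(∑ i, (∑ j, |A i j|) ^ q) ^ (1/q), ?_⟩
      rintro r ⟨x, hx, rfl⟩
      rw [div_le_iff₀ (pnorm_pos hp hx)]
      exact mulVec_pnorm_le hp hq A x
    have hmem : pnorm q (A.mulVec u) / pnorm p u ∈
        {r : ℝ | ∃ x : Fin d → ℝ, x ≠ 0 ∧ r = pnorm q (A.mulVec x) / pnorm p x} := ⟨u, hu, rfl⟩
    exact (div_le_iff₀ hpos).mp (le_csSup hb hmem)

/-- A continuous piecewise linear function, given by `x ↦ A_i x + b_i` on each piece of a
finite partition of `ℝ^d` into convex sets, is `(ℓ_p, ℓ_q)`-Lipschitz with constant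
`max_i ‖A_i‖_{p,q}`. -/
theorem piecewise_linear_lipschitz (d L : ℕ) (hL : 0 < L)
    (f : (Fin d → ℝ) → Fin d → ℝ) (hf : Continuous f)
    (P : Fin L → Set (Fin d → ℝ))
    (hcover : ∀ x, ∃ i, x ∈ P i)
    (hdisj : ∀ i j, i ≠ j → P i ∩ P j = ∅)
    (hconv : ∀ i, Convex ℝ (P i))
    (A : Fin L → Matrix (Fin d) (Fin d) ℝ) (b : Fin L → Fin d → ℝ)
    (haff : ∀ i, ∀ x ∈ P i, f x = (A i).mulVec x + b i)
    (p q : ℝ) (hp : 1 ≤ p) (hq : 1 ≤ q) (x y : Fin d → ℝ) :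
    pnorm q (f x - f y) ≤ (⨆ i, subNorm p q (A i)) * pnorm p (x - y) := by
  haveI : Nonempty (Fin L) := ⟨⟨0, hL⟩⟩
  set M := ⨆ i, subNorm p q (A i) with hM
  have hM0 : 0 ≤ M := Real.iSup_nonneg fun i => subNorm_nonneg _ _ _
  have hMi : ∀ i, subNorm p q (A i) ≤ M := fun i =>
    le_ciSup (f := fun i => subNorm p q (A i)) (Set.Finite.bddAbove (Set.finite_range _)) i
  set c := pnorm p (y - x) with hc
  have hc0 : 0 ≤ c := pnorm_nonneg _ _
  set g : ℝ → Fin d → ℝ := fun t => x + t • (y - x) with hg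
  have hgc : Continuous g := by fun_prop
  have hφc : Continuous fun t => pnorm q (f (g t) - f x) :=
    (pnorm_continuous hq).comp ((hf.comp hgc).sub continuous_const)
  set S : Set ℝ := {t | t ∈ Set.Icc (0:ℝ) 1 ∧ pnorm q (f (g t) - f x) ≤ M * t * c} with hS
  have hg0 : g 0 = x := by simp [hg]
  have h0S : (0:ℝ) ∈ S := by
    refine ⟨⟨le_refl 0, zero_le_one⟩, ?_⟩
    rw [hg0, sub_self, pnorm_zero hq]
    simp
  have hSne : S.Nonempty := ⟨0, h0S⟩
  have hSbdd : BddAbove S := ⟨1, fun t ht => ht.1.2⟩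
  have hSclosed : IsClosed S := by
    have : S = Set.Icc 0 1 ∩ {t | pnorm q (f (g t) - f x) ≤ M * t * c} := rfl
    rw [this]
    exact isClosed_Icc.inter
      (isClosed_le hφc (((continuous_const.mul continuous_id).mul continuous_const)))
  set t₀ := sSup S with ht₀
  have ht₀S : t₀ ∈ S := hSclosed.csSup_mem hSne hSbdd
  have ht₀1 : t₀ ≤ 1 := csSup_le hSne fun t ht => ht.1.2
  have ht₀0 : 0 ≤ t₀ := ht₀S.1.1
  -- convexity of preimages of pieces along the line
  have hIconv : ∀ i, Convex ℝ (g ⁻¹' P i) := by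
    intro i
    have hgeq : g = fun t : ℝ => AffineMap.lineMap (k := ℝ) x y t := by
      funext t
      show x + t • (y - x) = AffineMap.lineMap (k := ℝ) x y t
      rw [AffineMap.lineMap_apply, vsub_eq_sub, vadd_eq_add]
      abel
    rw [hgeq]
    exact (hconv i).affine_preimage (AffineMap.lineMap x y)
  have key : t₀ = 1 := by
    by_contra hne
    have ht₀lt : t₀ < 1 := lt_of_le_of_ne ht₀1 hne
    set seq : ℕ → ℝ := fun n => t₀ + (1 - t₀) / (n + 1) with hseq
    have hseqmem : ∀ n, seq n ∈ Set.Ioc t₀ 1 := by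
      intro n
      have h1 : (0:ℝ) < (n:ℝ) + 1 := by positivity
      have h2 : 0 < (1 - t₀) / ((n:ℝ) + 1) := div_pos (by linarith) h1
      have h3 : (1 - t₀) / ((n:ℝ) + 1) ≤ 1 - t₀ := by
        apply div_le_self (by linarith)
        linarith
      constructor
      · simp only [hseq]; linarith
      · simp only [hseq]; linarith
    have hseqanti : ∀ m n : ℕ, m ≤ n → seq n ≤ seq m := by
      intro m n hmn
      have h1 : (0:ℝ) < (m:ℝ) + 1 := by positivity
      have h2 : (m:ℝ) + 1 ≤ (n:ℝ) + 1 := by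
        have := (Nat.cast_le (α := ℝ)).mpr hmn; linarith
      have := div_le_div_of_nonneg_left (by linarith : (0:ℝ) ≤ 1 - t₀) h1 h2
      simp only [hseq]; linarith
    choose idx hidx using fun n => hcover (g (seq n))
    obtain ⟨i, hi⟩ := Finite.exists_infinite_fiber idx
    have hinf : (idx ⁻¹' {i}).Infinite := Set.infinite_coe_iff.mp hi
    obtain ⟨m, hm⟩ := hinf.nonempty
    have hmi : idx m = i := hm
    have hu1 : seq m ∈ Set.Ioc t₀ 1 := hseqmem m
    have hgu : g (seq m) ∈ P i := hmi ▸ hidx m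
    -- every point of (t₀, seq m] maps into P i
    have hseg : ∀ t ∈ Set.Ioc t₀ (seq m), g t ∈ P i := by
      intro t ht
      obtain ⟨N, hN⟩ := exists_nat_gt ((1 - t₀) / (t - t₀))
      have htpos : 0 < t - t₀ := by linarith [ht.1]
      obtain ⟨n, hnmem, hNn⟩ := hinf.exists_gt N
      have hni : idx n = i := hnmem
      have hseqn : seq n < t := by
        have h1 : (1 - t₀) / ((n:ℝ) + 1) < t - t₀ := by
          rw [div_lt_iff₀ (by positivity)]
          have h2 : (1 - t₀) / (t - t₀) < (n:ℝ) + 1 := by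
            have : (N:ℝ) ≤ (n:ℝ) := Nat.cast_le.mpr hNn.le
            linarith
          have h3 : 1 - t₀ < ((n:ℝ) + 1) * (t - t₀) := (div_lt_iff₀ htpos).mp h2
          nlinarith [h3]
        simp only [hseq]; linarith
      have hgn : g (seq n) ∈ P i := hni ▸ hidx n
      have := (hIconv i).ordConnected.out hgn hgu
      exact this ⟨hseqn.le, ht.2⟩
    -- the affine formula extends to t₀ by continuity
    have hft₀ : f (g t₀) = (A i).mulVec (g t₀) + b i := by
      have h1 : Filter.Tendsto (fun t => f (g t)) (nhdsWithin t₀ (Set.Ioi t₀))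
          (nhds (f (g t₀))) :=
        ((hf.comp hgc).tendsto t₀).mono_left nhdsWithin_le_nhds
      have h2 : Filter.Tendsto (fun t => (A i).mulVec (g t) + b i)
          (nhdsWithin t₀ (Set.Ioi t₀)) (nhds ((A i).mulVec (g t₀) + b i)) := by
        apply Filter.Tendsto.mono_left _ nhdsWithin_le_nhds
        apply Continuous.tendsto
        have : Continuous fun v : Fin d → ℝ => (A i).mulVec v :=
          LinearMap.continuous_on_pi ((A i).mulVecLin)
        fun_prop
      have heq : (fun t => (A i).mulVec (g t) + b i) =ᶠ[nhdsWithin t₀ (Set.Ioi t₀)]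
          fun t => f (g t) := by
        filter_upwards [Ioc_mem_nhdsGT_of_mem ⟨le_refl t₀, hu1.1⟩] with t ht
        exact (haff i (g t) (hseg t ht)).symm
      exact tendsto_nhds_unique h1 (Filter.Tendsto.congr' heq h2)
    -- increment bound
    have hgdiff : ∀ t : ℝ, g t - g t₀ = (t - t₀) • (y - x) := by
      intro t
      simp only [hg, sub_smul]
      abel
    have hstep : pnorm q (f (g (seq m)) - f (g t₀)) ≤ M * (seq m - t₀) * c := by
      have hfu : f (g (seq m)) = (A i).mulVec (g (seq m)) + b i := haff i _ hgu
      have hsub : f (g (seq m)) - f (g t₀) = (A i).mulVec ((seq m - t₀) • (y - x)) := by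
        rw [hfu, hft₀, ← hgdiff]
        rw [Matrix.mulVec_sub]
        abel
      rw [hsub]
      calc pnorm q ((A i).mulVec ((seq m - t₀) • (y - x)))
          ≤ subNorm p q (A i) * pnorm p ((seq m - t₀) • (y - x)) := subNorm_spec hp hq _ _
        _ = subNorm p q (A i) * ((seq m - t₀) * c) := by
            rw [pnorm_smul hp (by linarith [hu1.1] : (0:ℝ) ≤ seq m - t₀)]
        _ ≤ M * ((seq m - t₀) * c) := by
            exact mul_le_mul_of_nonneg_right (hMi i)
              (mul_nonneg (by linarith [hu1.1]) hc0)
        _ = M * (seq m - t₀) * c := by ring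
    have humem : seq m ∈ S := by
      refine ⟨⟨le_trans ht₀0 hu1.1.le, hu1.2⟩, ?_⟩
      have hdecomp : f (g (seq m)) - f x = (f (g t₀) - f x) + (f (g (seq m)) - f (g t₀)) := by
        abel
      calc pnorm q (f (g (seq m)) - f x)
          ≤ pnorm q (f (g t₀) - f x) + pnorm q (f (g (seq m)) - f (g t₀)) := by
            rw [hdecomp]; exact pnorm_add_le hq _ _
        _ ≤ M * t₀ * c + M * (seq m - t₀) * c := add_le_add ht₀S.2 hstep
        _ = M * seq m * c := by ring
    exact absurd (le_csSup hSbdd humem) (not_le.mpr hu1.1)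
  have h1S : (1:ℝ) ∈ S := key ▸ ht₀S
  have hg1 : g 1 = y := by simp [hg]
  have hfin := h1S.2
  rw [hg1] at hfin
  have e1 : pnorm q (f x - f y) = pnorm q (f y - f x) := by
    rw [← pnorm_neg q (f y - f x), neg_sub]
  have e2 : pnorm p (x - y) = c := by
    rw [hc, ← pnorm_neg p (y - x), neg_sub]
  rw [e1, e2]
  calc pnorm q (f y - f x) ≤ M * 1 * c := hfin
    _ = M * c := by ring
end

section
/- For any d ∈ ℕ and any k with 2 ≤ k ≤ d, the soft-max matrices satisfy the recursion SM_{(k−1, d)} = SM_{(k, d)} · (I + E_{k,1} − E_{k,k}), where I is the d×d identity matrix and E_{i,j} is the d×d matrix with a single 1 in entry (i, j) and zeros elsewhere. -/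
open Finset

/-!
Right multiplication by `I + E_{k,1} − E_{k,k}` adds column `k` to column `1` and clears column `k`.
Columns `2, …, k − 1` of `SM_{(k,d)}` and `SM_{(k−1,d)}` already agree, and column `k` of
`SM_{(k−1,d)}` is zero, so everything reduces to column `1`, where row by row one needs
`(k−2)/(k−1) = (k−1)/k − 1/(k(k−1))`, `−1/(k−1) = −1/k − 1/(k(k−1))` and `0 = −1/k + 1/k`.
In Lean the indices are `0`-based, so column `k` is `⟨k − 1, _⟩`.
-/

namespace Matrix

variable {n α : Type*} [Fintype n] [DecidableEq n] [Ring α]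

theorem mul_single_one_apply (M : Matrix n n α) (r c i j : n) :
    (M * single r c (1 : α)) i j = if j = c then M i r else 0 := by
  split_ifs with h
  · rw [h, mul_single_apply_same, mul_one]
  · exact mul_single_apply_of_ne _ _ _ _ _ h _

theorem mul_one_add_single_sub_single_apply (M : Matrix n n α) (r c i j : n) :
    (M * (1 + single r c 1 - single r r 1 : Matrix n n α)) i j =
      M i j + (if j = c then M i r else 0) - (if j = r then M i r else 0) := by
  rw [Matrix.mul_sub, Matrix.mul_add, Matrix.mul_one, sub_apply, add_apply,
    mul_single_one_apply, mul_single_one_apply]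

end Matrix

section SM

variable {k d : ℕ} {i j : Fin d}

theorem SM_apply_of_le_left (h : k ≤ i) : SM k d i j = 0 := by
  simp only [SM, Matrix.of_apply]
  rw [if_pos (by omega)]

theorem SM_apply_of_le_right (h : k ≤ j) : SM k d i j = 0 := by
  simp only [SM, Matrix.of_apply]
  rw [if_pos (by omega)]

theorem SM_sub_one_apply_of_ne (hj₀ : (j : ℕ) ≠ 0) (hjk : (j : ℕ) ≠ k - 1) :
    SM (k - 1) d i j = SM k d i j := by
  simp only [SM, Matrix.of_apply]
  split_ifs <;> first | rfl | omega

theorem SM_apply_col_zero (hj : (j : ℕ) = 0) (hi : (i : ℕ) < k) :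
    SM k d i j = if (i : ℕ) = 0 then ((k : ℝ) - 1) / k else -1 / k := by
  simp only [SM, Matrix.of_apply]
  split_ifs <;> first | rfl | omega

theorem SM_apply_col_last (hk : 2 ≤ k) (hj : (j : ℕ) + 1 = k) (hi : (i : ℕ) < k) :
    SM k d i j = if (i : ℕ) + 1 = k then 1 / (k : ℝ) else -1 / ((k : ℝ) * (k - 1)) := by
  subst hj
  simp only [SM, Matrix.of_apply]
  split_ifs <;> first | omega | (push_cast; simp_all)

theorem SM_sub_one_apply_col_zero {j' : Fin d} (hk : 2 ≤ k) (hj : (j : ℕ) = 0)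
    (hj' : (j' : ℕ) + 1 = k) : SM (k - 1) d i j = SM k d i j + SM k d i j' := by
  rcases lt_or_ge (i : ℕ) k with hi | hi
  · rw [SM_apply_col_zero hj hi, SM_apply_col_last hk hj' hi]
    by_cases hlast : (i : ℕ) + 1 = k
    · rw [SM_apply_of_le_left (by omega), if_neg (by omega), if_pos hlast]
      ring
    · have hk₀ : (k : ℝ) ≠ 0 := by positivity
      have hk₁ : (k : ℝ) - 1 ≠ 0 := sub_ne_zero.2 (by exact_mod_cast (by omega : k ≠ 1))
      rw [SM_apply_col_zero hj (by omega), if_neg hlast, Nat.cast_sub (by omega), Nat.cast_one]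
      split_ifs <;> (field_simp; ring)
  · rw [SM_apply_of_le_left hi, SM_apply_of_le_left hi, SM_apply_of_le_left (by omega), add_zero]

end SM

/-- Recursion for the soft-max matrices:
`SM_{(k−1,d)} = SM_{(k,d)}·(I + E_{k,1} − E_{k,k})` for `2 ≤ k ≤ d`
(indices written 1-indexed; `E_{i,j}` has a single `1` at entry `(i,j)`). -/
theorem SM_recursion (d k : ℕ) (hk : 2 ≤ k) (hkd : k ≤ d) :
    SM (k - 1) d =
      SM k d *
        (1 + Matrix.single (⟨k - 1, by omega⟩ : Fin d) (⟨0, by omega⟩ : Fin d) (1 : ℝ)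
           - Matrix.single (⟨k - 1, by omega⟩ : Fin d) (⟨k - 1, by omega⟩ : Fin d)
               (1 : ℝ)) := by
  ext i j
  rw [Matrix.mul_one_add_single_sub_single_apply]
  by_cases hj₀ : (j : ℕ) = 0
  · rw [if_pos (Fin.ext hj₀), if_neg (Fin.ne_of_val_ne (by dsimp only; omega)), sub_zero]
    exact SM_sub_one_apply_col_zero hk hj₀ (by dsimp only; omega)
  · rw [if_neg (Fin.ne_of_val_ne hj₀)]
    by_cases hjk : (j : ℕ) = k - 1
    · have hj : j = ⟨k - 1, by omega⟩ := Fin.ext hjk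
      rw [if_pos hj, add_zero, ← hj, sub_self]
      exact SM_apply_of_le_right (by omega)
    · rw [if_neg (Fin.ne_of_val_ne hjk), add_zero, sub_zero]
      exact SM_sub_one_apply_of_ne hj₀ hjk
end

section
/- Let D be a finite set, k ≥ 1, δ ≥ 0, and let h : 2^D → ℝ₊ be a monotone submodular function. Let OPT = max{h(S) : S ⊆ D, |S| ≤ k}. Suppose ∅ = S_0 ⊆ S_1 ⊆ ⋯ ⊆ S_k is a chain with S_i = S_{i−1} ∪ {v_i} for elements v_i ∈ D, such that at every step the chosen element is a (1/(1+δ))-approximate greedy choice: h(S_{i−1} ∪ {v_i}) − h(S_{i−1}) ≥ (1/(1+δ)) · max_{v ∈ D} ( h(S_{i−1} ∪ {v}) − h(S_{i−1}) ) for all i ∈ {1, …, k}. Then h(S_k) ≥ (1 − exp(−1/(1+δ))) · OPT. -/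
open Finset

/-- Marginal-sum bound for submodular functions. -/
lemma submod_union_sum {α : Type*} [DecidableEq α] (h : Finset α → ℝ)
    (hmono : ∀ R T : Finset α, R ⊆ T → h R ≤ h T)
    (hsubmod : ∀ R T : Finset α, R ⊆ T → ∀ v ∉ T,
      h (insert v T) - h T ≤ h (insert v R) - h R)
    (T R : Finset α) :
    h (T ∪ R) ≤ h T + ∑ w ∈ R, (h (insert w T) - h T) := by
  induction R using Finset.induction_on with
  | empty => simp
  | @insert a R' ha ih =>
    rw [Finset.union_insert, Finset.sum_insert ha]
    have h1 : h (insert a (T ∪ R')) ≤ h (T ∪ R') + (h (insert a T) - h T) := by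
      by_cases hmem : a ∈ T ∪ R'
      · rw [Finset.insert_eq_self.mpr hmem]
        have := hmono T (insert a T) (Finset.subset_insert a T)
        linarith
      · have := hsubmod T (T ∪ R') Finset.subset_union_left a hmem
        linarith
    linarith

/-- Approximate greedy for monotone submodular maximization under a cardinality
constraint: if every step gains at least a `1/(1+δ)` fraction of the best marginal gain,
then the final set is a `(1 − e^{−1/(1+δ)})`-approximation of the optimum. -/
theorem approximate_greedy_submodular (α : Type*) [Fintype α] [DecidableEq α]
    [Nonempty α] (h : Finset α → ℝ)
    (hnonneg : ∀ S : Finset α, 0 ≤ h S)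
    (hmono : ∀ R T : Finset α, R ⊆ T → h R ≤ h T)
    (hsubmod : ∀ R T : Finset α, R ⊆ T → ∀ v ∉ T,
      h (insert v T) - h T ≤ h (insert v R) - h R)
    (k : ℕ) (hk : 1 ≤ k) (δ : ℝ) (hδ : 0 ≤ δ)
    (S : ℕ → Finset α) (v : ℕ → α)
    (hS0 : S 0 = ∅)
    (hchain : ∀ i : ℕ, 1 ≤ i → i ≤ k → S i = insert (v i) (S (i - 1)))
    (hgreedy : ∀ i : ℕ, 1 ≤ i → i ≤ k →
      h (insert (v i) (S (i - 1))) - h (S (i - 1)) ≥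
        (1 / (1 + δ)) *
          Finset.univ.sup' Finset.univ_nonempty
            (fun w => h (insert w (S (i - 1))) - h (S (i - 1)))) :
    h (S k) ≥ (1 - Real.exp (-1 / (1 + δ))) *
      ((Finset.univ.powerset.filter fun T => T.card ≤ k).sup'
        ⟨∅, by simp⟩ h) := by
  set OPT : ℝ := (Finset.univ.powerset.filter fun T => T.card ≤ k).sup'
      ⟨∅, by simp⟩ h with hOPT
  have hδ1 : (0:ℝ) < 1 + δ := by linarith
  have hk0 : (0:ℝ) < (k:ℝ) := by exact_mod_cast hk
  set c : ℝ := 1 / ((1 + δ) * k) with hc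
  have hc0 : 0 < c := by positivity
  have hc1 : c ≤ 1 := by
    rw [hc, div_le_one (by positivity)]
    have hk1 : (1:ℝ) ≤ k := by exact_mod_cast hk
    nlinarith
  -- OPT nonneg
  have hOPTnn : 0 ≤ OPT := le_trans (hnonneg ∅)
    (Finset.le_sup' h (by simp [Nat.one_le_iff_ne_zero.mp hk]))
  -- get optimal set
  obtain ⟨Tstar, hTmem, hTeq⟩ := Finset.exists_mem_eq_sup'
    (⟨∅, by simp⟩ : ((Finset.univ.powerset.filter fun T => T.card ≤ k)).Nonempty) h
  have hTcard : Tstar.card ≤ k := (Finset.mem_filter.mp hTmem).2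
  -- key per-step bound
  have key : ∀ i : ℕ, 1 ≤ i → i ≤ k →
      OPT - h (S i) ≤ (1 - c) * (OPT - h (S (i-1))) := by
    intro i h1 h2
    set M : ℝ := Finset.univ.sup' Finset.univ_nonempty
        (fun w => h (insert w (S (i - 1))) - h (S (i - 1))) with hM
    have hMnn : 0 ≤ M := by
      obtain ⟨w⟩ := ‹Nonempty α›
      refine le_trans ?_ (Finset.le_sup' _ (Finset.mem_univ w))
      have := hmono (S (i-1)) (insert w (S (i-1))) (Finset.subset_insert _ _)
      linarith
    have hbound : OPT - h (S (i-1)) ≤ k * M := by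
      have h1' : h Tstar ≤ h (S (i-1) ∪ Tstar) := hmono _ _ Finset.subset_union_right
      have h2' := submod_union_sum h hmono hsubmod (S (i-1)) Tstar
      have h3' : ∑ w ∈ Tstar, (h (insert w (S (i-1))) - h (S (i-1))) ≤ Tstar.card * M := by
        calc ∑ w ∈ Tstar, (h (insert w (S (i-1))) - h (S (i-1)))
            ≤ ∑ _w ∈ Tstar, M := Finset.sum_le_sum (fun w _ =>
              Finset.le_sup' (fun u => h (insert u (S (i - 1))) - h (S (i - 1)))
                (Finset.mem_univ w))
          _ = Tstar.card * M := by simp [mul_comm]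
      have h4' : (Tstar.card : ℝ) * M ≤ k * M := by
        have : (Tstar.card : ℝ) ≤ k := by exact_mod_cast hTcard
        nlinarith
      rw [hOPT, hTeq]
      linarith
    have hg := hgreedy i h1 h2
    rw [← hchain i h1 h2] at hg
    have hstep : h (S i) - h (S (i-1)) ≥ c * (OPT - h (S (i-1))) := by
      have : (1 / (1 + δ)) * M ≥ c * (OPT - h (S (i-1))) := by
        rw [hc]
        rw [div_mul_eq_mul_div, div_mul_eq_mul_div, ge_iff_le, div_le_div_iff₀ (by positivity) hδ1]
        nlinarith
      linarith
    nlinarith [hstep]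
  -- induct
  have ind : ∀ i : ℕ, i ≤ k → OPT - h (S i) ≤ (1 - c)^i * OPT := by
    intro i
    induction i with
    | zero => intro _; simpa [hS0] using hnonneg ∅
    | succ n ih =>
      intro hn
      have hle : OPT - h (S (n+1)) ≤ (1 - c) * (OPT - h (S n)) := by
        simpa using key (n+1) (Nat.le_add_left 1 n) hn
      have h1c : 0 ≤ 1 - c := by linarith
      calc OPT - h (S (n+1)) ≤ (1 - c) * (OPT - h (S n)) := hle
        _ ≤ (1 - c) * ((1 - c)^n * OPT) := by
            exact mul_le_mul_of_nonneg_left (ih (Nat.le_of_succ_le hn)) h1c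
        _ = (1 - c)^(n+1) * OPT := by ring
  have hpow : (1 - c)^k ≤ Real.exp (-1 / (1 + δ)) := by
    have h1 : (1 - c)^k ≤ (Real.exp (-c))^k := by
      apply pow_le_pow_left₀ (by linarith)
      linarith [Real.add_one_le_exp (-c)]
    have h2 : (Real.exp (-c))^k = Real.exp (-c * k) := by
      rw [← Real.exp_nat_mul]; ring_nf
    have h3 : -c * k = -1 / (1 + δ) := by
      rw [hc]; field_simp
    rw [h2, h3] at h1
    exact h1
  have := ind k le_rfl
  have hfin : OPT - h (S k) ≤ Real.exp (-1 / (1 + δ)) * OPT := by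
    calc OPT - h (S k) ≤ (1 - c)^k * OPT := this
      _ ≤ Real.exp (-1 / (1 + δ)) * OPT := mul_le_mul_of_nonneg_right hpow hOPTnn
  linarith
end
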